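/- arXiv:1303.3769 — 4 statements merged into one kernel-verified Lean document; each statement's English description precedes it below -/
import Mathlib

section
/- Let L > 0, ε > 0, η > 0, φ₊, φ₋ be constants, let ρ : [-L, L] → ℝ be continuous and let φ : [-L, L] → ℝ be twice continuously differentiable with ε φ''(x) = -ρ(x) for all x ∈ [-L, L], and satisfying the Robin boundary conditions (φ(L) - φ₊) + η φ'(L) = 0 and (φ(-L) - φ₋) - η φ'(-L) = 0. Then ∫_{-L}^{L} (1/2) ρ(x) φ(x) dx + (ε/(2η)) ( φ₊ φ(L) + φ₋ φ(-L) ) = ∫_{-L}^{L} (ε/2) (φ'(x))² dx + (ε/(2η)) ( φ(L)² + φ(-L)² ). -/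
open MeasureTheory intervalIntegral

/-! Substituting ρ = -ε φ'' and integrating by parts turns ∫ ρ φ / 2 into the field energy
∫ ε φ'² / 2 minus the boundary term (ε/2) [φ φ']_{-L}^{L}; the Robin conditions give
η φ'(±L) = ±(φ_± - φ(±L)), which makes that boundary term the difference of the two
boundary energies. -/

theorem integral_mul_deriv_deriv_eq_sub {φ : ℝ → ℝ} (hφ : ContDiff ℝ 2 φ) (a b : ℝ) :
    ∫ x in a..b, φ x * deriv (deriv φ) x
      = φ b * deriv φ b - φ a * deriv φ a - ∫ x in a..b, deriv φ x ^ 2 := by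
  have hφ' : ContDiff ℝ 1 (deriv φ) := hφ.iterate_deriv' 1 1
  have hdiff : Differentiable ℝ φ := hφ.differentiable two_ne_zero
  have hdiff' : Differentiable ℝ (deriv φ) := hφ'.differentiable one_ne_zero
  simp only [sq]
  exact integral_mul_deriv_eq_deriv_mul (fun x _ ↦ (hdiff x).hasDerivAt)
    (fun x _ ↦ (hdiff' x).hasDerivAt) (hφ'.continuous.intervalIntegrable _ _)
    ((hφ'.continuous_deriv le_rfl).intervalIntegrable _ _)

theorem energy_forms_equivalent_general
    (L ε η φp φm : ℝ) (hL : 0 < L) (hη : 0 < η)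
    (ρ φ : ℝ → ℝ) (hφ : ContDiff ℝ 2 φ)
    (hpde : ∀ x ∈ Set.Icc (-L) L, ε * deriv (deriv φ) x = -ρ x)
    (hRobinR : (φ L - φp) + η * deriv φ L = 0)
    (hRobinL : (φ (-L) - φm) - η * deriv φ (-L) = 0) :
    (∫ x in (-L)..L, (1 / 2) * ρ x * φ x)
        + (ε / (2 * η)) * (φp * φ L + φm * φ (-L))
      = (∫ x in (-L)..L, (ε / 2) * (deriv φ x) ^ 2)
        + (ε / (2 * η)) * (φ L ^ 2 + φ (-L) ^ 2) := by
  have hcharge : (∫ x in (-L)..L, (1 / 2) * ρ x * φ x)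
      = -(ε / 2) * ∫ x in (-L)..L, φ x * deriv (deriv φ) x := by
    rw [← intervalIntegral.integral_const_mul]
    refine integral_congr fun x hx ↦ ?_
    rw [Set.uIcc_of_le (by linarith)] at hx
    linear_combination (φ x / 2) * hpde x hx
  have hderivR : deriv φ L = (φp - φ L) / η := by field_simp; linarith
  have hderivL : deriv φ (-L) = (φ (-L) - φm) / η := by field_simp; linarith
  rw [hcharge, integral_mul_deriv_deriv_eq_sub hφ, intervalIntegral.integral_const_mul,
    hderivR, hderivL]
  field_simp
  ring

/-- Equivalence of the two forms of the total electrostatic energy for a solution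
of the Poisson equation ε φ'' = -ρ with Robin boundary conditions at x = ±L. -/
theorem energy_forms_equivalent
    (L ε η φp φm : ℝ) (hL : 0 < L) (hε : 0 < ε) (hη : 0 < η)
    (ρ φ : ℝ → ℝ) (hρ : Continuous ρ) (hφ : ContDiff ℝ 2 φ)
    (hpde : ∀ x ∈ Set.Icc (-L) L, ε * deriv (deriv φ) x = -ρ x)
    (hRobinR : (φ L - φp) + η * deriv φ L = 0)
    (hRobinL : (φ (-L) - φm) - η * deriv φ (-L) = 0) :
    (∫ x in (-L)..L, (1 / 2) * ρ x * φ x)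
        + (ε / (2 * η)) * (φp * φ L + φm * φ (-L))
      = (∫ x in (-L)..L, (ε / 2) * (deriv φ x) ^ 2)
        + (ε / (2 * η)) * (φ L ^ 2 + φ (-L) ^ 2) :=
  energy_forms_equivalent_general L ε η φp φm hL hη ρ φ hφ hpde hRobinR hRobinL
end

section
/- Let L > 0, ε > 0, η > 0, k > 0, e > 0, φ₊, φ₋ be constants; let N ≥ 1; for each i = 1,…,N let Dᵢ > 0, zᵢ ∈ ℝ, c_{i,0} > 0; let ρ₀ : [-L,L] → ℝ be continuous. Let cᵢ, φ : [-L, L] × [0, ∞) → ℝ be smooth with cᵢ > 0 everywhere, satisfying: (i) ∂cᵢ/∂t = ∂/∂x [ Dᵢ ( ∂cᵢ/∂x + (zᵢ e / k) cᵢ ∂φ/∂x ) ]; (ii) ε ∂²φ/∂x² = -( ρ₀ + Σᵢ zᵢ e cᵢ ); (iii) the flux Dᵢ ( ∂cᵢ/∂x + (zᵢ e / k) cᵢ ∂φ/∂x ) vanishes at x = ±L for every i and t; (iv) (φ(L,t) - φ₊) + η ∂φ/∂x(L,t) = 0 and (φ(-L,t) - φ₋) - η ∂φ/∂x(-L,t)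 = 0 for all t. Define the chemical potentials μᵢ = k (log(cᵢ/c_{i,0}) + 1) + zᵢ e φ and the total energy E(t) = ∫_{-L}^{L} [ k Σᵢ cᵢ log(cᵢ/c_{i,0}) + (1/2)( ρ₀ + Σᵢ zᵢ e cᵢ ) φ ] dx + (ε/(2η)) ( φ₊ φ(L,t) + φ₋ φ(-L,t) ). Then for all t > 0, dE/dt = - ∫_{-L}^{L} Σᵢ (Dᵢ/k) cᵢ ( ∂μᵢ/∂x )² dx. -/
open MeasureTheory intervalIntegral Function Set

noncomputable def pd1 (f : ℝ × ℝ → ℝ) : ℝ × ℝ → ℝ := fun p => fderiv ℝ f p (1, 0)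
noncomputable def pd2 (f : ℝ × ℝ → ℝ) : ℝ × ℝ → ℝ := fun p => fderiv ℝ f p (0, 1)

lemma contDiff_pd1 {f : ℝ × ℝ → ℝ} (hf : ContDiff ℝ (⊤ : ℕ∞) f) : ContDiff ℝ (⊤ : ℕ∞) (pd1 f) :=
  (hf.fderiv_right (le_refl _)).clm_apply contDiff_const

lemma contDiff_pd2 {f : ℝ × ℝ → ℝ} (hf : ContDiff ℝ (⊤ : ℕ∞) f) : ContDiff ℝ (⊤ : ℕ∞) (pd2 f) :=
  (hf.fderiv_right (le_refl _)).clm_apply contDiff_const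

lemma hasDerivAt_pd1 {f : ℝ × ℝ → ℝ} (hf : ContDiff ℝ (⊤ : ℕ∞) f) (x t : ℝ) :
    HasDerivAt (fun y => f (y, t)) (pd1 f (x, t)) x := by
  have h1 : HasDerivAt (fun y : ℝ => (y, t)) ((1 : ℝ), (0 : ℝ)) x :=
    (hasDerivAt_id x).prodMk (hasDerivAt_const x t)
  exact ((hf.differentiable (by simp) (x, t)).hasFDerivAt).comp_hasDerivAt x h1

lemma hasDerivAt_pd2 {f : ℝ × ℝ → ℝ} (hf : ContDiff ℝ (⊤ : ℕ∞) f) (x t : ℝ) :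
    HasDerivAt (fun s => f (x, s)) (pd2 f (x, t)) t := by
  have h1 : HasDerivAt (fun s : ℝ => (x, s)) ((0 : ℝ), (1 : ℝ)) t :=
    (hasDerivAt_const t x).prodMk (hasDerivAt_id t)
  exact ((hf.differentiable (by simp) (x, t)).hasFDerivAt).comp_hasDerivAt t h1

lemma pd_comm {f : ℝ × ℝ → ℝ} (hf : ContDiff ℝ (⊤ : ℕ∞) f) (p : ℝ × ℝ) :
    pd1 (pd2 f) p = pd2 (pd1 f) p := by
  have hdf : ∀ q, HasFDerivAt f (fderiv ℝ f q) q := fun q =>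
    (hf.differentiable (by simp) q).hasFDerivAt
  have hdd : DifferentiableAt ℝ (fderiv ℝ f) p :=
    (hf.fderiv_right (m := (⊤ : ℕ∞)) (le_refl _)).differentiable (by simp) p
  have h2 : HasFDerivAt (fderiv ℝ f) (fderiv ℝ (fderiv ℝ f) p) p := hdd.hasFDerivAt
  have hsymm := second_derivative_symmetric hdf h2 (1, 0) (0, 1)
  have e1 : pd1 (pd2 f) p = fderiv ℝ (fderiv ℝ f) p (1, 0) (0, 1) := by
    show (fderiv ℝ (fun q => (fderiv ℝ f q) (0, 1)) p) (1, 0) = _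
    rw [fderiv_clm_apply hdd (differentiableAt_const _)]
    simp
  have e2 : pd2 (pd1 f) p = fderiv ℝ (fderiv ℝ f) p (0, 1) (1, 0) := by
    show (fderiv ℝ (fun q => (fderiv ℝ f q) (1, 0)) p) (0, 1) = _
    rw [fderiv_clm_apply hdd (differentiableAt_const _)]
    simp
  rw [e1, e2, hsymm]

lemma continuous_pd_eval {f : ℝ × ℝ → ℝ} (hf : ContDiff ℝ (⊤ : ℕ∞) f) (t : ℝ) :
    Continuous fun x => f (x, t) :=
  hf.continuous.comp (continuous_id.prodMk continuous_const)

lemma ibp_helper (a b : ℝ) {u v u' v' : ℝ → ℝ}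
    (hu : ∀ x, HasDerivAt u (u' x) x) (hv : ∀ x, HasDerivAt v (v' x) x)
    (hu' : Continuous u') (hv' : Continuous v') :
    ∫ x in a..b, u' x * v x
      = u b * v b - u a * v a - ∫ x in a..b, u x * v' x := by
  have hucont : Continuous u :=
    continuous_iff_continuousAt.2 fun x => (hu x).continuousAt
  have hvcont : Continuous v :=
    continuous_iff_continuousAt.2 fun x => (hv x).continuousAt
  have h := integral_deriv_mul_eq_sub_of_hasDerivAt (u := u) (v := v) (u' := u') (v' := v')
    (a := a) (b := b) hucont.continuousOn hvcont.continuousOn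
    (fun x _ => hu x) (fun x _ => hv x)
    (hu'.intervalIntegrable a b) (hv'.intervalIntegrable a b)
  have hsplit : ∫ x in a..b, (u' x * v x + u x * v' x)
      = (∫ x in a..b, u' x * v x) + ∫ x in a..b, u x * v' x :=
    integral_add ((hu'.mul hvcont).intervalIntegrable a b)
      ((hucont.mul hv').intervalIntegrable a b)
  rw [hsplit] at h
  linarith

lemma param_deriv_helper (a b t : ℝ) (W Wt : ℝ × ℝ → ℝ)
    (hW : Continuous W) (hWt : Continuous Wt)
    (hd : ∀ x s, HasDerivAt (fun s' => W (x, s')) (Wt (x, s)) s) :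
    HasDerivAt (fun s => ∫ x in a..b, W (x, s)) (∫ x in a..b, Wt (x, t)) t := by
  obtain ⟨C0, hC0⟩ :=
    (isCompact_uIcc.prod (isCompact_Icc (a := t - 1) (b := t + 1))).exists_bound_of_continuousOn
      hWt.continuousOn
  have h := intervalIntegral.hasDerivAt_integral_of_dominated_loc_of_deriv_le
    (F := fun s x => W (x, s)) (F' := fun s x => Wt (x, s)) (x₀ := t) (a := a) (b := b)
    (bound := fun _ => C0) (μ := volume) (s := Metric.ball t 1) (Metric.ball_mem_nhds t one_pos)
    (Filter.Eventually.of_forall fun s =>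
      ((hW.comp (continuous_id.prodMk continuous_const)).aestronglyMeasurable))
    ((hW.comp (continuous_id.prodMk continuous_const)).intervalIntegrable a b)
    ((hWt.comp (continuous_id.prodMk continuous_const)).aestronglyMeasurable)
    (Filter.Eventually.of_forall fun x hx s hs => by
      have hx' : x ∈ Set.uIcc a b := Set.uIoc_subset_uIcc hx
      have hs' : s ∈ Set.Icc (t - 1) (t + 1) := by
        rw [Metric.mem_ball, Real.dist_eq] at hs
        have h2 := abs_lt.1 hs
        constructor <;> linarith [h2.1, h2.2]
      exact hC0 (x, s) ⟨hx', hs'⟩)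
    (intervalIntegrable_const)
    (Filter.Eventually.of_forall fun x _ s _ => hd x s)
  exact h.2

/-- Energy dissipation law for the one-dimensional Poisson–Nernst–Planck equations
on [-L, L] with no-flux boundary conditions for the ion concentrations and Robin
boundary conditions for the electrostatic potential. -/
theorem pnp_energy_dissipation
    (L ε η k e φp φm : ℝ) (hL : 0 < L) (hε : 0 < ε) (hη : 0 < η)
    (hk : 0 < k) (he : 0 < e)
    (N : ℕ) (hN : 1 ≤ N)
    (D z c₀ : Fin N → ℝ) (hD : ∀ i, 0 < D i) (hc₀ : ∀ i, 0 < c₀ i)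
    (ρ₀ : ℝ → ℝ) (hρ₀ : Continuous ρ₀)
    (c : Fin N → ℝ → ℝ → ℝ) (φ : ℝ → ℝ → ℝ)
    (hc : ∀ i, ContDiff ℝ (⊤ : ℕ∞) (Function.uncurry (c i)))
    (hφ : ContDiff ℝ (⊤ : ℕ∞) (Function.uncurry φ))
    (hcpos : ∀ i x t, 0 < c i x t)
    (hNP : ∀ i, ∀ x ∈ Set.Icc (-L) L, ∀ t ≥ (0 : ℝ),
      deriv (fun s => c i x s) t =
        deriv (fun y => D i * (deriv (fun y' => c i y' t) y
          + (z i * e / k) * c i y t * deriv (fun y' => φ y' t) y)) x)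
    (hPoisson : ∀ x ∈ Set.Icc (-L) L, ∀ t ≥ (0 : ℝ),
      ε * deriv (fun y => deriv (fun y' => φ y' t) y) x
        = -(ρ₀ x + ∑ i, z i * e * c i x t))
    (hfluxL : ∀ i, ∀ t ≥ (0 : ℝ),
      D i * (deriv (fun y => c i y t) (-L)
        + (z i * e / k) * c i (-L) t * deriv (fun y => φ y t) (-L)) = 0)
    (hfluxR : ∀ i, ∀ t ≥ (0 : ℝ),
      D i * (deriv (fun y => c i y t) L
        + (z i * e / k) * c i L t * deriv (fun y => φ y t) L) = 0)
    (hRobinR : ∀ t ≥ (0 : ℝ), (φ L t - φp) + η * deriv (fun y => φ y t) L = 0)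
    (hRobinL : ∀ t ≥ (0 : ℝ), (φ (-L) t - φm) - η * deriv (fun y => φ y t) (-L) = 0)
    (μ : Fin N → ℝ → ℝ → ℝ)
    (hμ : ∀ i x t, μ i x t = k * (Real.log (c i x t / c₀ i) + 1) + z i * e * φ x t)
    (E : ℝ → ℝ)
    (hE : ∀ t, E t =
      (∫ x in (-L)..L,
        (k * ∑ i, c i x t * Real.log (c i x t / c₀ i)
          + (1 / 2) * (ρ₀ x + ∑ i, z i * e * c i x t) * φ x t))
      + (ε / (2 * η)) * (φp * φ L t + φm * φ (-L) t)) :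
    ∀ t > (0 : ℝ),
      deriv E t
        = - ∫ x in (-L)..L, ∑ i, (D i / k) * c i x t * (deriv (fun y => μ i y t) x) ^ 2 := by
  intro t ht
  have hLL : (-L) ≤ L := by linarith
  have hkne : k ≠ 0 := ne_of_gt hk
  have hcne : ∀ i (x s : ℝ), c i x s ≠ 0 := fun i x s => ne_of_gt (hcpos i x s)
  -- basic partial-derivative facts
  have hCder1 : ∀ i (x s : ℝ),
      HasDerivAt (fun y => c i y s) (pd1 (uncurry (c i)) (x, s)) x :=
    fun i x s => hasDerivAt_pd1 (hc i) x s
  have hCder2 : ∀ i (x s : ℝ),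
      HasDerivAt (fun s' => c i x s') (pd2 (uncurry (c i)) (x, s)) s :=
    fun i x s => hasDerivAt_pd2 (hc i) x s
  have hPder1 : ∀ (x s : ℝ), HasDerivAt (fun y => φ y s) (pd1 (uncurry φ) (x, s)) x :=
    fun x s => hasDerivAt_pd1 hφ x s
  have hPder2 : ∀ (x s : ℝ), HasDerivAt (fun s' => φ x s') (pd2 (uncurry φ) (x, s)) s :=
    fun x s => hasDerivAt_pd2 hφ x s
  have hPxder1 : ∀ (x s : ℝ),
      HasDerivAt (fun y => pd1 (uncurry φ) (y, s)) (pd1 (pd1 (uncurry φ)) (x, s)) x :=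
    fun x s => hasDerivAt_pd1 (contDiff_pd1 hφ) x s
  have hPtder1 : ∀ (x s : ℝ),
      HasDerivAt (fun y => pd2 (uncurry φ) (y, s)) (pd1 (pd2 (uncurry φ)) (x, s)) x :=
    fun x s => hasDerivAt_pd1 (contDiff_pd2 hφ) x s
  have hswap : pd2 (pd1 (uncurry φ)) = pd1 (pd2 (uncurry φ)) :=
    funext fun q => (pd_comm hφ q).symm
  have hPxder2 : ∀ (x s : ℝ),
      HasDerivAt (fun s' => pd1 (uncurry φ) (x, s')) (pd1 (pd2 (uncurry φ)) (x, s)) s := by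
    intro x s
    have h := hasDerivAt_pd2 (contDiff_pd1 hφ) x s
    rwa [← pd_comm hφ (x, s)] at h
  have hPxxder2 : ∀ (x s : ℝ),
      HasDerivAt (fun s' => pd1 (pd1 (uncurry φ)) (x, s'))
        (pd1 (pd1 (pd2 (uncurry φ))) (x, s)) s := by
    intro x s
    have h := hasDerivAt_pd2 (contDiff_pd1 (contDiff_pd1 hφ)) x s
    have e : pd2 (pd1 (pd1 (uncurry φ))) (x, s) = pd1 (pd1 (pd2 (uncurry φ))) (x, s) := by
      rw [← pd_comm (contDiff_pd1 hφ) (x, s), hswap]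
    rwa [e] at h
  have hPtxder1 : ∀ (x s : ℝ),
      HasDerivAt (fun y => pd1 (pd2 (uncurry φ)) (y, s))
        (pd1 (pd1 (pd2 (uncurry φ))) (x, s)) x :=
    fun x s => hasDerivAt_pd1 (contDiff_pd1 (contDiff_pd2 hφ)) x s
  -- continuity facts (at fixed time t)
  have hcontc : ∀ i, Continuous fun x => c i x t := fun i => continuous_pd_eval (hc i) t
  have hcontcx : ∀ i, Continuous fun x => pd1 (uncurry (c i)) (x, t) :=
    fun i => continuous_pd_eval (contDiff_pd1 (hc i)) t
  have hcontct : ∀ i, Continuous fun x => pd2 (uncurry (c i)) (x, t) :=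
    fun i => continuous_pd_eval (contDiff_pd2 (hc i)) t
  have hcontφ : Continuous fun x => φ x t := continuous_pd_eval hφ t
  have hcontpx : Continuous fun x => pd1 (uncurry φ) (x, t) :=
    continuous_pd_eval (contDiff_pd1 hφ) t
  have hcontpt : Continuous fun x => pd2 (uncurry φ) (x, t) :=
    continuous_pd_eval (contDiff_pd2 hφ) t
  have hcontpxx : Continuous fun x => pd1 (pd1 (uncurry φ)) (x, t) :=
    continuous_pd_eval (contDiff_pd1 (contDiff_pd1 hφ)) t
  have hcontptx : Continuous fun x => pd1 (pd2 (uncurry φ)) (x, t) :=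
    continuous_pd_eval (contDiff_pd1 (contDiff_pd2 hφ)) t
  have hcontptxx : Continuous fun x => pd1 (pd1 (pd2 (uncurry φ))) (x, t) :=
    continuous_pd_eval (contDiff_pd1 (contDiff_pd1 (contDiff_pd2 hφ))) t
  have hclogcont : ∀ i, Continuous fun x => Real.log (c i x t / c₀ i) := fun i =>
    Continuous.log ((hcontc i).div_const _)
      fun x => ne_of_gt (div_pos (hcpos i x t) (hc₀ i))
  -- smoothness of the flux
  have hJsmooth : ∀ i, ContDiff ℝ (⊤ : ℕ∞) (fun p : ℝ × ℝ =>
      D i * (pd1 (uncurry (c i)) p + (z i * e / k) * uncurry (c i) p * pd1 (uncurry φ) p)) :=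
    fun i => contDiff_const.mul ((contDiff_pd1 (hc i)).add
      (((contDiff_const.mul (hc i)).mul (contDiff_pd1 hφ))))
  -- rewritten Nernst–Planck equation
  have hNP' : ∀ i, ∀ x ∈ Set.Icc (-L) L,
      pd2 (uncurry (c i)) (x, t)
        = pd1 (fun p : ℝ × ℝ => D i * (pd1 (uncurry (c i)) p
            + (z i * e / k) * uncurry (c i) p * pd1 (uncurry φ) p)) (x, t) := by
    intro i x hx
    have h := hNP i x hx t ht.le
    have hfun : (fun y => D i * (deriv (fun y' => c i y' t) y
        + (z i * e / k) * c i y t * deriv (fun y' => φ y' t) y))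
        = (fun y => D i * (pd1 (uncurry (c i)) (y, t)
            + (z i * e / k) * uncurry (c i) (y, t) * pd1 (uncurry φ) (y, t))) := by
      funext y
      rw [(hCder1 i y t).deriv, (hPder1 y t).deriv]
      rfl
    rw [hfun] at h
    rw [← (hCder2 i x t).deriv, h]
    exact (hasDerivAt_pd1 (hJsmooth i) x t).deriv
  -- rewritten Poisson equation
  have hPoisson' : ∀ x ∈ Set.Icc (-L) L, ∀ s ≥ (0 : ℝ),
      ε * pd1 (pd1 (uncurry φ)) (x, s) = -(ρ₀ x + ∑ i, z i * e * c i x s) := by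
    intro x hx s hs
    have h := hPoisson x hx s hs
    have hfun : (fun y => deriv (fun y' => φ y' s) y) = fun y => pd1 (uncurry φ) (y, s) :=
      funext fun y => (hPder1 y s).deriv
    rw [hfun] at h
    rwa [(hPxder1 x s).deriv] at h
  -- rewritten flux boundary conditions at time t
  have hfluxR' : ∀ i, D i * (pd1 (uncurry (c i)) (L, t)
      + (z i * e / k) * uncurry (c i) (L, t) * pd1 (uncurry φ) (L, t)) = 0 := by
    intro i
    have h := hfluxR i t ht.le
    rw [(hCder1 i L t).deriv, (hPder1 L t).deriv] at h
    exact h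
  have hfluxL' : ∀ i, D i * (pd1 (uncurry (c i)) (-L, t)
      + (z i * e / k) * uncurry (c i) (-L, t) * pd1 (uncurry φ) (-L, t)) = 0 := by
    intro i
    have h := hfluxL i t ht.le
    rw [(hCder1 i (-L) t).deriv, (hPder1 (-L) t).deriv] at h
    exact h
  -- rewritten Robin boundary conditions
  have hRobinR' : ∀ s ≥ (0 : ℝ), (φ L s - φp) + η * pd1 (uncurry φ) (L, s) = 0 := by
    intro s hs
    have h := hRobinR s hs
    rwa [(hPder1 L s).deriv] at h
  have hRobinL' : ∀ s ≥ (0 : ℝ), (φ (-L) s - φm) - η * pd1 (uncurry φ) (-L, s) = 0 := by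
    intro s hs
    have h := hRobinL s hs
    rwa [(hPder1 (-L) s).deriv] at h
  -- time-differentiated Robin boundary conditions
  have hRobin_tR : pd2 (uncurry φ) (L, t) + η * pd1 (pd2 (uncurry φ)) (L, t) = 0 := by
    have hDer : HasDerivAt (fun s => (φ L s - φp) + η * pd1 (uncurry φ) (L, s))
        (pd2 (uncurry φ) (L, t) + η * pd1 (pd2 (uncurry φ)) (L, t)) t :=
      ((hPder2 L t).sub_const φp).add ((hPxder2 L t).const_mul η)
    have hev : (fun s => (φ L s - φp) + η * pd1 (uncurry φ) (L, s)) =ᶠ[nhds t]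
        fun _ => (0 : ℝ) := by
      filter_upwards [eventually_gt_nhds ht] with s hs using hRobinR' s hs.le
    exact (hDer.congr_of_eventuallyEq hev.symm).unique (hasDerivAt_const t 0)
  have hRobin_tL : pd2 (uncurry φ) (-L, t) - η * pd1 (pd2 (uncurry φ)) (-L, t) = 0 := by
    have hDer : HasDerivAt (fun s => (φ (-L) s - φm) - η * pd1 (uncurry φ) (-L, s))
        (pd2 (uncurry φ) (-L, t) - η * pd1 (pd2 (uncurry φ)) (-L, t)) t :=
      ((hPder2 (-L) t).sub_const φm).sub ((hPxder2 (-L) t).const_mul η)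
    have hev : (fun s => (φ (-L) s - φm) - η * pd1 (uncurry φ) (-L, s)) =ᶠ[nhds t]
        fun _ => (0 : ℝ) := by
      filter_upwards [eventually_gt_nhds ht] with s hs using hRobinL' s hs.le
    exact (hDer.congr_of_eventuallyEq hev.symm).unique (hasDerivAt_const t 0)
  -- time-differentiated Poisson equation
  have hPois_t : ∀ x ∈ Set.Icc (-L) L,
      ε * pd1 (pd1 (pd2 (uncurry φ))) (x, t)
        = -(∑ i, z i * e * pd2 (uncurry (c i)) (x, t)) := by
    intro x hx
    have hDer : HasDerivAt
        (fun s => ε * pd1 (pd1 (uncurry φ)) (x, s) + (ρ₀ x + ∑ i, z i * e * c i x s))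
        (ε * pd1 (pd1 (pd2 (uncurry φ))) (x, t)
          + (0 + ∑ i, z i * e * pd2 (uncurry (c i)) (x, t))) t :=
      ((hPxxder2 x t).const_mul ε).add ((hasDerivAt_const t (ρ₀ x)).add
        (HasDerivAt.fun_sum fun i _ => (hCder2 i x t).const_mul (z i * e)))
    have hev : (fun s => ε * pd1 (pd1 (uncurry φ)) (x, s) + (ρ₀ x + ∑ i, z i * e * c i x s))
        =ᶠ[nhds t] fun _ => (0 : ℝ) := by
      filter_upwards [eventually_gt_nhds ht] with s hs
      have h := hPoisson' x hx s hs.le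
      show ε * pd1 (pd1 (uncurry φ)) (x, s) + (ρ₀ x + ∑ i, z i * e * c i x s) = 0
      linarith
    have h0 := (hDer.congr_of_eventuallyEq hev.symm).unique (hasDerivAt_const t 0)
    linarith
  -- time derivative of the energy density
  have hWt_hasDeriv : ∀ (x s : ℝ), HasDerivAt
      (fun s' => k * ∑ i, c i x s' * Real.log (c i x s' / c₀ i)
        + (1 / 2) * (ρ₀ x + ∑ i, z i * e * c i x s') * φ x s')
      (k * (∑ i, (Real.log (c i x s / c₀ i) + 1) * pd2 (uncurry (c i)) (x, s))
        + ((1 / 2) * (∑ i, z i * e * pd2 (uncurry (c i)) (x, s)) * φ x s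
           + (1 / 2) * (ρ₀ x + ∑ i, z i * e * c i x s) * pd2 (uncurry φ) (x, s))) s := by
    intro x s
    have hterm : ∀ i, HasDerivAt (fun s' => c i x s' * Real.log (c i x s' / c₀ i))
        ((Real.log (c i x s / c₀ i) + 1) * pd2 (uncurry (c i)) (x, s)) s := by
      intro i
      have hC := hCder2 i x s
      have hlog : HasDerivAt (fun s' => Real.log (c i x s' / c₀ i))
          ((pd2 (uncurry (c i)) (x, s) / c₀ i) / (c i x s / c₀ i)) s :=
        (hC.div_const (c₀ i)).log (ne_of_gt (div_pos (hcpos i x s) (hc₀ i)))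
      have h := hC.fun_mul hlog
      refine h.congr_deriv ?_
      have h1 : c i x s ≠ 0 := hcne i x s
      have h2 : c₀ i ≠ 0 := ne_of_gt (hc₀ i)
      field_simp
      try ring
    have hsum1 := HasDerivAt.fun_sum (fun i (_ : i ∈ Finset.univ) => hterm i)
    have hρ : HasDerivAt (fun s' => ρ₀ x + ∑ i, z i * e * c i x s')
        (∑ i, z i * e * pd2 (uncurry (c i)) (x, s)) s := by
      have h := (hasDerivAt_const s (ρ₀ x)).fun_add
        (HasDerivAt.fun_sum fun i (_ : i ∈ Finset.univ) => (hCder2 i x s).const_mul (z i * e))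
      simpa using h
    have hP := hPder2 x s
    have h := (hsum1.const_mul k).fun_add ((hρ.const_mul (1 / 2 : ℝ)).fun_mul hP)
    convert h using 1
    try ring
  -- joint continuity of the energy density and its time derivative
  have hWcont : Continuous (fun q : ℝ × ℝ =>
      k * ∑ i, c i q.1 q.2 * Real.log (c i q.1 q.2 / c₀ i)
        + (1 / 2) * (ρ₀ q.1 + ∑ i, z i * e * c i q.1 q.2) * φ q.1 q.2) := by
    have h1 : ∀ i, Continuous (fun q : ℝ × ℝ => c i q.1 q.2) := fun i => (hc i).continuous
    have h2 : ∀ i, Continuous (fun q : ℝ × ℝ => Real.log (c i q.1 q.2 / c₀ i)) := fun i =>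
      Continuous.log ((h1 i).div_const _) fun q => ne_of_gt (div_pos (hcpos i q.1 q.2) (hc₀ i))
    exact (continuous_const.mul (continuous_finset_sum _ fun i _ => (h1 i).mul (h2 i))).add
      ((continuous_const.mul ((hρ₀.comp continuous_fst).add
        (continuous_finset_sum _ fun i _ => continuous_const.mul (h1 i)))).mul hφ.continuous)
  have hWtcont : Continuous (fun q : ℝ × ℝ =>
      k * (∑ i, (Real.log (c i q.1 q.2 / c₀ i) + 1) * pd2 (uncurry (c i)) q)
        + ((1 / 2) * (∑ i, z i * e * pd2 (uncurry (c i)) q) * φ q.1 q.2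
           + (1 / 2) * (ρ₀ q.1 + ∑ i, z i * e * c i q.1 q.2) * pd2 (uncurry φ) q)) := by
    have h1 : ∀ i, Continuous (fun q : ℝ × ℝ => c i q.1 q.2) := fun i => (hc i).continuous
    have h2 : ∀ i, Continuous (fun q : ℝ × ℝ => Real.log (c i q.1 q.2 / c₀ i)) := fun i =>
      Continuous.log ((h1 i).div_const _) fun q => ne_of_gt (div_pos (hcpos i q.1 q.2) (hc₀ i))
    have h3 : ∀ i, Continuous (pd2 (uncurry (c i))) := fun i => (contDiff_pd2 (hc i)).continuous
    exact (continuous_const.mul (continuous_finset_sum _ fun i _ =>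
        ((h2 i).add continuous_const).mul (h3 i))).add
      (((continuous_const.mul (continuous_finset_sum _ fun i _ =>
          continuous_const.mul (h3 i))).mul hφ.continuous).add
        ((continuous_const.mul ((hρ₀.comp continuous_fst).add
          (continuous_finset_sum _ fun i _ => continuous_const.mul (h1 i)))).mul
            (contDiff_pd2 hφ).continuous))
  -- derivative of E at t
  have hEder : HasDerivAt E
      ((∫ x in (-L)..L,
        (k * (∑ i, (Real.log (c i x t / c₀ i) + 1) * pd2 (uncurry (c i)) (x, t))
          + ((1 / 2) * (∑ i, z i * e * pd2 (uncurry (c i)) (x, t)) * φ x t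
             + (1 / 2) * (ρ₀ x + ∑ i, z i * e * c i x t) * pd2 (uncurry φ) (x, t))))
        + (ε / (2 * η)) * (φp * pd2 (uncurry φ) (L, t) + φm * pd2 (uncurry φ) (-L, t))) t := by
    have hEfun : E = fun s => (∫ x in (-L)..L,
        (k * ∑ i, c i x s * Real.log (c i x s / c₀ i)
          + (1 / 2) * (ρ₀ x + ∑ i, z i * e * c i x s) * φ x s))
      + (ε / (2 * η)) * (φp * φ L s + φm * φ (-L) s) := funext hE
    rw [hEfun]
    apply HasDerivAt.add
    · exact param_deriv_helper (-L) L t _ _ hWcont hWtcont (fun x s => hWt_hasDeriv x s)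
    · exact (((hPder2 L t).const_mul φp).add ((hPder2 (-L) t).const_mul φm)).const_mul _
  -- spatial derivative of the chemical potential
  have hμder : ∀ i (x : ℝ), HasDerivAt
      (fun y => k * (Real.log (c i y t / c₀ i) + 1) + z i * e * φ y t)
      (k * pd1 (uncurry (c i)) (x, t) / c i x t + z i * e * pd1 (uncurry φ) (x, t)) x := by
    intro i x
    have hlog : HasDerivAt (fun y => Real.log (c i y t / c₀ i))
        ((pd1 (uncurry (c i)) (x, t) / c₀ i) / (c i x t / c₀ i)) x :=
      ((hCder1 i x t).div_const (c₀ i)).log (ne_of_gt (div_pos (hcpos i x t) (hc₀ i)))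
    have h := ((hlog.add_const 1).const_mul k).fun_add ((hPder1 x t).const_mul (z i * e))
    refine h.congr_deriv ?_
    have h1 : c i x t ≠ 0 := hcne i x t
    have h2 : c₀ i ≠ 0 := ne_of_gt (hc₀ i)
    field_simp
    try ring
  have hμd_eq : ∀ i (x : ℝ), deriv (fun y => μ i y t) x
      = k * pd1 (uncurry (c i)) (x, t) / c i x t + z i * e * pd1 (uncurry φ) (x, t) := by
    intro i x
    have hfun : (fun y => μ i y t)
        = fun y => k * (Real.log (c i y t / c₀ i) + 1) + z i * e * φ y t :=
      funext fun y => hμ i y t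
    rw [hfun]
    exact (hμder i x).deriv
  have hcontm : ∀ i, Continuous fun x =>
      k * pd1 (uncurry (c i)) (x, t) / c i x t + z i * e * pd1 (uncurry φ) (x, t) := fun i =>
    ((continuous_const.mul (hcontcx i)).div (hcontc i) fun x => hcne i x t).add
      (continuous_const.mul hcontpx)
  have hcontμf : ∀ i, Continuous fun x =>
      k * (Real.log (c i x t / c₀ i) + 1) + z i * e * φ x t := fun i =>
    (continuous_const.mul ((hclogcont i).add continuous_const)).add
      (continuous_const.mul hcontφ)
  have hcontJx : ∀ i, Continuous fun x =>
      pd1 (fun p : ℝ × ℝ => D i * (pd1 (uncurry (c i)) p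
        + (z i * e / k) * uncurry (c i) p * pd1 (uncurry φ) p)) (x, t) :=
    fun i => continuous_pd_eval (contDiff_pd1 (hJsmooth i)) t
  -- entropy/drift part: integration by parts with no-flux boundary conditions
  have hIB : ∀ i, (∫ x in (-L)..L,
      (k * (Real.log (c i x t / c₀ i) + 1) + z i * e * φ x t) * pd2 (uncurry (c i)) (x, t))
      = - ∫ x in (-L)..L, (D i / k) * c i x t
          * (k * pd1 (uncurry (c i)) (x, t) / c i x t + z i * e * pd1 (uncurry φ) (x, t)) ^ 2 := by
    intro i
    have hstep1 : (∫ x in (-L)..L,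
        (k * (Real.log (c i x t / c₀ i) + 1) + z i * e * φ x t) * pd2 (uncurry (c i)) (x, t))
        = ∫ x in (-L)..L,
            pd1 (fun p : ℝ × ℝ => D i * (pd1 (uncurry (c i)) p
              + (z i * e / k) * uncurry (c i) p * pd1 (uncurry φ) p)) (x, t)
            * (k * (Real.log (c i x t / c₀ i) + 1) + z i * e * φ x t) := by
      apply integral_congr
      intro x hx
      beta_reduce
      rw [hNP' i x (by rwa [Set.uIcc_of_le hLL] at hx)]
      ring
    have hibp := ibp_helper (-L) L
      (u := fun y => D i * (pd1 (uncurry (c i)) (y, t)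
        + (z i * e / k) * uncurry (c i) (y, t) * pd1 (uncurry φ) (y, t)))
      (v := fun y => k * (Real.log (c i y t / c₀ i) + 1) + z i * e * φ y t)
      (u' := fun x => pd1 (fun p : ℝ × ℝ => D i * (pd1 (uncurry (c i)) p
        + (z i * e / k) * uncurry (c i) p * pd1 (uncurry φ) p)) (x, t))
      (v' := fun x => k * pd1 (uncurry (c i)) (x, t) / c i x t
        + z i * e * pd1 (uncurry φ) (x, t))
      (fun x => hasDerivAt_pd1 (hJsmooth i) x t) (fun x => hμder i x) (hcontJx i) (hcontm i)
    beta_reduce at hibp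
    rw [hstep1, hibp, hfluxR' i, hfluxL' i]
    have hlast : (∫ x in (-L)..L,
        (D i * (pd1 (uncurry (c i)) (x, t)
          + (z i * e / k) * uncurry (c i) (x, t) * pd1 (uncurry φ) (x, t)))
          * (k * pd1 (uncurry (c i)) (x, t) / c i x t + z i * e * pd1 (uncurry φ) (x, t)))
        = ∫ x in (-L)..L, (D i / k) * c i x t
            * (k * pd1 (uncurry (c i)) (x, t) / c i x t
              + z i * e * pd1 (uncurry φ) (x, t)) ^ 2 := by
      apply integral_congr
      intro x _
      have h1 : c i x t ≠ 0 := hcne i x t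
      show (D i * (pd1 (uncurry (c i)) (x, t)
          + (z i * e / k) * uncurry (c i) (x, t) * pd1 (uncurry φ) (x, t)))
          * (k * pd1 (uncurry (c i)) (x, t) / c i x t + z i * e * pd1 (uncurry φ) (x, t))
        = (D i / k) * c i x t
            * (k * pd1 (uncurry (c i)) (x, t) / c i x t
              + z i * e * pd1 (uncurry φ) (x, t)) ^ 2
      have hu : uncurry (c i) (x, t) = c i x t := rfl
      rw [hu]
      field_simp
    rw [hlast]
    ring
  -- electrostatic part: double integration by parts
  have hσcont : Continuous fun x => (∑ i, z i * e * pd2 (uncurry (c i)) (x, t)) :=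
    continuous_finset_sum _ fun i _ => continuous_const.mul (hcontct i)
  have hρcont : Continuous fun x => ρ₀ x + ∑ i, z i * e * c i x t :=
    hρ₀.add (continuous_finset_sum _ fun i _ => continuous_const.mul (hcontc i))
  have hIA : (∫ x in (-L)..L,
      ((ρ₀ x + ∑ i, z i * e * c i x t) * pd2 (uncurry φ) (x, t)
        - (∑ i, z i * e * pd2 (uncurry (c i)) (x, t)) * φ x t))
      = -(ε * (pd1 (uncurry φ) (L, t) * pd2 (uncurry φ) (L, t)
            - pd1 (pd2 (uncurry φ)) (L, t) * φ L t))
        + ε * (pd1 (uncurry φ) (-L, t) * pd2 (uncurry φ) (-L, t)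
            - pd1 (pd2 (uncurry φ)) (-L, t) * φ (-L) t) := by
    have hsub : (∫ x in (-L)..L, ((ρ₀ x + ∑ i, z i * e * c i x t) * pd2 (uncurry φ) (x, t)
        - (∑ i, z i * e * pd2 (uncurry (c i)) (x, t)) * φ x t))
        = (∫ x in (-L)..L, (ρ₀ x + ∑ i, z i * e * c i x t) * pd2 (uncurry φ) (x, t))
          - ∫ x in (-L)..L, (∑ i, z i * e * pd2 (uncurry (c i)) (x, t)) * φ x t :=
      integral_sub ((hρcont.mul hcontpt).intervalIntegrable _ _)
        ((hσcont.mul hcontφ).intervalIntegrable _ _)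
    have h1 : (∫ x in (-L)..L, (ρ₀ x + ∑ i, z i * e * c i x t) * pd2 (uncurry φ) (x, t))
        = -ε * ∫ x in (-L)..L, pd1 (pd1 (uncurry φ)) (x, t) * pd2 (uncurry φ) (x, t) := by
      rw [← intervalIntegral.integral_const_mul]
      apply integral_congr
      intro x hx
      have hx' : x ∈ Set.Icc (-L) L := by rwa [Set.uIcc_of_le hLL] at hx
      have h := hPoisson' x hx' t ht.le
      have he' : (ρ₀ x + ∑ i, z i * e * c i x t)
          = -(ε * pd1 (pd1 (uncurry φ)) (x, t)) := by linarith
      beta_reduce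
      rw [he']; ring
    have h2 := ibp_helper (-L) L
      (u := fun x => pd1 (uncurry φ) (x, t)) (v := fun x => pd2 (uncurry φ) (x, t))
      (u' := fun x => pd1 (pd1 (uncurry φ)) (x, t))
      (v' := fun x => pd1 (pd2 (uncurry φ)) (x, t))
      (fun x => hPxder1 x t) (fun x => hPtder1 x t) hcontpxx hcontptx
    beta_reduce at h2
    have h3 : (∫ x in (-L)..L, (∑ i, z i * e * pd2 (uncurry (c i)) (x, t)) * φ x t)
        = -ε * ∫ x in (-L)..L, pd1 (pd1 (pd2 (uncurry φ))) (x, t) * φ x t := by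
      rw [← intervalIntegral.integral_const_mul]
      apply integral_congr
      intro x hx
      have hx' : x ∈ Set.Icc (-L) L := by rwa [Set.uIcc_of_le hLL] at hx
      have h := hPois_t x hx'
      have he' : (∑ i, z i * e * pd2 (uncurry (c i)) (x, t))
          = -(ε * pd1 (pd1 (pd2 (uncurry φ))) (x, t)) := by linarith
      beta_reduce
      rw [he']; ring
    have h4 := ibp_helper (-L) L
      (u := fun x => pd1 (pd2 (uncurry φ)) (x, t)) (v := fun x => φ x t)
      (u' := fun x => pd1 (pd1 (pd2 (uncurry φ))) (x, t))
      (v' := fun x => pd1 (uncurry φ) (x, t))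
      (fun x => hPtxder1 x t) (fun x => hPder1 x t) hcontptxx hcontpx
    beta_reduce at h4
    have h5 : (∫ x in (-L)..L, pd1 (uncurry φ) (x, t) * pd1 (pd2 (uncurry φ)) (x, t))
        = ∫ x in (-L)..L, pd1 (pd2 (uncurry φ)) (x, t) * pd1 (uncurry φ) (x, t) := by
      apply integral_congr; intro x _; ring
    rw [hsub, h1, h2, h3, h4, h5]
    ring
  -- splitting the time derivative of the bulk integral
  have hintμut : ∀ i, IntervalIntegrable (fun x =>
      (k * (Real.log (c i x t / c₀ i) + 1) + z i * e * φ x t) * pd2 (uncurry (c i)) (x, t))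
      volume (-L) L := fun i => ((hcontμf i).mul (hcontct i)).intervalIntegrable _ _
  have hWt_split : (∫ x in (-L)..L,
      (k * (∑ i, (Real.log (c i x t / c₀ i) + 1) * pd2 (uncurry (c i)) (x, t))
        + ((1 / 2) * (∑ i, z i * e * pd2 (uncurry (c i)) (x, t)) * φ x t
           + (1 / 2) * (ρ₀ x + ∑ i, z i * e * c i x t) * pd2 (uncurry φ) (x, t))))
      = (∑ i, ∫ x in (-L)..L,
          (k * (Real.log (c i x t / c₀ i) + 1) + z i * e * φ x t) * pd2 (uncurry (c i)) (x, t))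
        + (1 / 2) * ∫ x in (-L)..L,
            ((ρ₀ x + ∑ i, z i * e * c i x t) * pd2 (uncurry φ) (x, t)
              - (∑ i, z i * e * pd2 (uncurry (c i)) (x, t)) * φ x t) := by
    rw [← intervalIntegral.integral_finset_sum (fun i _ => hintμut i),
        ← intervalIntegral.integral_const_mul,
        ← intervalIntegral.integral_add
          ((continuous_finset_sum _ fun i _ =>
            (hcontμf i).fun_mul (hcontct i)).intervalIntegrable _ _)
          ((continuous_const.fun_mul ((hρcont.fun_mul hcontpt).fun_sub
            (hσcont.fun_mul hcontφ))).intervalIntegrable _ _)]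
    apply integral_congr
    intro x _
    have hpt : (∑ i, (k * (Real.log (c i x t / c₀ i) + 1) + z i * e * φ x t)
          * pd2 (uncurry (c i)) (x, t))
        = k * (∑ i, (Real.log (c i x t / c₀ i) + 1) * pd2 (uncurry (c i)) (x, t))
          + (∑ i, z i * e * pd2 (uncurry (c i)) (x, t)) * φ x t := by
      rw [Finset.mul_sum, Finset.sum_mul, ← Finset.sum_add_distrib]
      exact Finset.sum_congr rfl fun i _ => by ring
    beta_reduce
    rw [hpt]
    ring
  -- the boundary terms cancel thanks to the Robin boundary conditions
  have hbdry : (1 / 2 : ℝ) * (-(ε * (pd1 (uncurry φ) (L, t) * pd2 (uncurry φ) (L, t)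
        - pd1 (pd2 (uncurry φ)) (L, t) * φ L t))
      + ε * (pd1 (uncurry φ) (-L, t) * pd2 (uncurry φ) (-L, t)
        - pd1 (pd2 (uncurry φ)) (-L, t) * φ (-L) t))
      + (ε / (2 * η)) * (φp * pd2 (uncurry φ) (L, t) + φm * pd2 (uncurry φ) (-L, t)) = 0 := by
    have h1 := hRobinR' t ht.le
    have h2 := hRobinL' t ht.le
    have hη' : η ≠ 0 := ne_of_gt hη
    have e1 : pd1 (uncurry φ) (L, t) = (φp - φ L t) / η := by
      field_simp; linarith
    have e2 : pd1 (uncurry φ) (-L, t) = (φ (-L) t - φm) / η := by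
      field_simp; linarith
    have e3 : pd1 (pd2 (uncurry φ)) (L, t) = -(pd2 (uncurry φ) (L, t)) / η := by
      field_simp; linarith [hRobin_tR]
    have e4 : pd1 (pd2 (uncurry φ)) (-L, t) = pd2 (uncurry φ) (-L, t) / η := by
      field_simp; linarith [hRobin_tL]
    rw [e1, e2, e3, e4]
    field_simp
    ring
  -- final assembly
  rw [hEder.deriv, hWt_split, hIA]
  simp only [hμd_eq]
  rw [intervalIntegral.integral_finset_sum (fun i _ =>
    ((continuous_const.fun_mul (hcontc i)).fun_mul ((hcontm i).fun_pow 2)).intervalIntegrable _ _)]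
  rw [Finset.sum_congr rfl (fun i (_ : i ∈ Finset.univ) => hIB i), Finset.sum_neg_distrib]
  linarith [hbdry]
end

section
/- Let J ≥ 2, Δx > 0, Δt > 0, 0 < γ < 2, χ ∈ ℝ, z ∈ ℝ. Let d : {0,…,J-1} → ℝ (half-grid diffusion values D_{j+1/2}), D : {0,…,J} → ℝ (grid diffusion values), φ : {-1,…,J+1} → ℝ, and c, C : {0,…,J} → ℝ (where C denotes c^{n+γ} and c denotes c^n). Suppose: (i) for every interior index 1 ≤ j ≤ J-1, (C_j - c_j)/(γΔt) = [ d_j (C_{j+1} + c_{j+1}) - (d_j + d_{j-1})(C_j + c_j) + d_{j-1}(C_{j-1} + c_{j-1}) ] / (2(Δx)²) + χ z [ D_{j+1}(C_{j+1} + c_{j+1})(φ_{j+2} - φ_j) - D_{j-1}(C_{j-1} + c_{j-1})(φ_j - φ_{j-2}) ] / (8(Δx)²); (ii) at the left boundary, (C_0 - c_0)/(γΔt) = d_0 (C_1 - C_0 + c_1 - c_0)/(Δx)² + χ z [ D_0 (C_0 + c_0)(φ_1 - φ_{-1}) + D_1 (C_1 + c_1)(φ_2 - φ_0) ] / (4(Δx)²);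 (iii) at the right boundary, (C_J - c_J)/(γΔt) = - d_{J-1} (C_J - C_{J-1} + c_J - c_{J-1})/(Δx)² - χ z [ D_{J-1}(C_{J-1} + c_{J-1})(φ_J - φ_{J-2}) + D_J (C_J + c_J)(φ_{J+1} - φ_{J-1}) ] / (4(Δx)²). Then the discrete trapezoidal totals agree exactly: Δx ( C_0/2 + Σ_{j=1}^{J-1} C_j + C_J/2 ) = Δx ( c_0/2 + Σ_{j=1}^{J-1} c_j + c_J/2 ). -/
/-!
The TR step is in flux form: with the numerical flux `F_{j+1/2}` built from the half-grid
diffusion and the averaged drift `D_j (C_j + c_j)(φ_{j+1} - φ_{j-1})`, each interior update is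
`C_j - c_j = γΔt (F_{j+1/2} - F_{j-1/2})`, while the boundary updates are
`C_0 - c_0 = 2 γΔt F_{1/2}` and `C_J - c_J = -2 γΔt F_{J-1/2}`. The interior fluxes telescope,
and the half weights of the trapezoidal rule make the boundary fluxes cancel the two that remain.
-/

open Finset

def trapezoidTotal {K : Type*} [Field K] (J : ℕ) (u : ℕ → K) : K :=
  u 0 / 2 + ∑ j ∈ Ico 1 J, u j + u J / 2

theorem trapezoidTotal_eq_of_flux {K : Type*} [Field K] [CharZero K] {J : ℕ} (hJ : 1 ≤ J)
    {u v F : ℕ → K} (hleft : u 0 - v 0 = 2 * F 0)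
    (hint : ∀ j, 1 ≤ j → j < J → u j - v j = F j - F (j - 1))
    (hright : u J - v J = -(2 * F (J - 1))) :
    trapezoidTotal J u = trapezoidTotal J v := by
  have hsum : ∑ j ∈ Ico 1 J, u j - ∑ j ∈ Ico 1 J, v j = F (J - 1) - F 0 := by
    rw [← sum_sub_distrib,
      sum_congr rfl fun j hj => hint j (mem_Ico.1 hj).1 (mem_Ico.1 hj).2]
    exact sum_Ico_sub (fun i => F (i - 1)) hJ
  unfold trapezoidTotal
  linear_combination hleft / 2 + hsum + hright / 2

section NernstPlanck

variable (Δx χ z : ℝ) (d D : ℕ → ℝ) (φ : ℤ → ℝ)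

def driftTerm (S : ℕ → ℝ) (j : ℕ) : ℝ :=
  D j * S j * (φ ((j : ℤ) + 1) - φ ((j : ℤ) - 1))

/-- The flux through `x_{j+1/2}`, for `S = Cⁿ⁺ᵞ + cⁿ`. -/
noncomputable def trFlux (S : ℕ → ℝ) (j : ℕ) : ℝ :=
  d j * (S (j + 1) - S j) / (2 * Δx ^ 2)
    + χ * z * (driftTerm D φ S (j + 1) + driftTerm D φ S j) / (8 * Δx ^ 2)

theorem trFlux_sub_trFlux (S : ℕ → ℝ) {j : ℕ} (hj : 1 ≤ j) :
    (d j * S (j + 1) - (d j + d (j - 1)) * S j + d (j - 1) * S (j - 1)) / (2 * Δx ^ 2)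
        + χ * z * (D (j + 1) * S (j + 1) * (φ ((j : ℤ) + 2) - φ (j : ℤ))
            - D (j - 1) * S (j - 1) * (φ (j : ℤ) - φ ((j : ℤ) - 2))) / (8 * Δx ^ 2)
      = trFlux Δx χ z d D φ S j - trFlux Δx χ z d D φ S (j - 1) := by
  obtain ⟨i, rfl⟩ : ∃ i, j = i + 1 := ⟨j - 1, by omega⟩
  simp only [trFlux, driftTerm, Nat.add_sub_cancel]
  push_cast
  ring_nf

theorem two_mul_trFlux_zero (C c : ℕ → ℝ) :
    d 0 * (C 1 - C 0 + c 1 - c 0) / Δx ^ 2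
        + χ * z * (D 0 * (C 0 + c 0) * (φ 1 - φ (-1)) + D 1 * (C 1 + c 1) * (φ 2 - φ 0))
          / (4 * Δx ^ 2)
      = 2 * trFlux Δx χ z d D φ (C + c) 0 := by
  simp only [trFlux, driftTerm, Pi.add_apply]
  push_cast
  ring_nf

theorem neg_two_mul_trFlux_last (C c : ℕ → ℝ) {J : ℕ} (hJ : 1 ≤ J) :
    -(d (J - 1) * (C J - C (J - 1) + c J - c (J - 1))) / Δx ^ 2
        - χ * z * (D (J - 1) * (C (J - 1) + c (J - 1)) * (φ (J : ℤ) - φ ((J : ℤ) - 2))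
            + D J * (C J + c J) * (φ ((J : ℤ) + 1) - φ ((J : ℤ) - 1))) / (4 * Δx ^ 2)
      = -(2 * trFlux Δx χ z d D φ (C + c) (J - 1)) := by
  obtain ⟨i, rfl⟩ : ∃ i, J = i + 1 := ⟨J - 1, by omega⟩
  simp only [trFlux, driftTerm, Pi.add_apply, Nat.add_sub_cancel]
  push_cast
  ring_nf

end NernstPlanck

theorem tr_step_mass_conservation_general
    (J : ℕ) (hJ : 2 ≤ J) (Δx Δt γ χ z : ℝ)
    (hΔt : 0 < Δt) (hγ0 : 0 < γ)
    (d D c C : ℕ → ℝ) (φ : ℤ → ℝ)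
    (hint : ∀ j, 1 ≤ j → j < J →
      (C j - c j) / (γ * Δt)
        = (d j * (C (j + 1) + c (j + 1)) - (d j + d (j - 1)) * (C j + c j)
            + d (j - 1) * (C (j - 1) + c (j - 1))) / (2 * Δx ^ 2)
          + χ * z * (D (j + 1) * (C (j + 1) + c (j + 1)) * (φ ((j : ℤ) + 2) - φ (j : ℤ))
              - D (j - 1) * (C (j - 1) + c (j - 1)) * (φ (j : ℤ) - φ ((j : ℤ) - 2)))
            / (8 * Δx ^ 2))
    (hleft :
      (C 0 - c 0) / (γ * Δt)
        = d 0 * (C 1 - C 0 + c 1 - c 0) / Δx ^ 2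
          + χ * z * (D 0 * (C 0 + c 0) * (φ 1 - φ (-1))
              + D 1 * (C 1 + c 1) * (φ 2 - φ 0)) / (4 * Δx ^ 2))
    (hright :
      (C J - c J) / (γ * Δt)
        = -(d (J - 1) * (C J - C (J - 1) + c J - c (J - 1))) / Δx ^ 2
          - χ * z * (D (J - 1) * (C (J - 1) + c (J - 1)) * (φ (J : ℤ) - φ ((J : ℤ) - 2))
              + D J * (C J + c J) * (φ ((J : ℤ) + 1) - φ ((J : ℤ) - 1))) / (4 * Δx ^ 2)) :
    Δx * (C 0 / 2 + ∑ j ∈ Finset.Ico 1 J, C j + C J / 2)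
      = Δx * (c 0 / 2 + ∑ j ∈ Finset.Ico 1 J, c j + c J / 2) := by
  have hγΔt : γ * Δt ≠ 0 := by positivity
  let F : ℕ → ℝ := fun j => γ * Δt * trFlux Δx χ z d D φ (C + c) j
  have hleft' : C 0 - c 0 = 2 * F 0 := by
    rw [(div_eq_iff hγΔt).1 (hleft.trans (two_mul_trFlux_zero Δx χ z d D φ C c))]
    ring
  have hint' : ∀ j, 1 ≤ j → j < J → C j - c j = F j - F (j - 1) := fun j hj hjJ => by
    rw [(div_eq_iff hγΔt).1 ((hint j hj hjJ).trans (trFlux_sub_trFlux Δx χ z d D φ (C + c) hj))]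
    ring
  have hright' : C J - c J = -(2 * F (J - 1)) := by
    rw [(div_eq_iff hγΔt).1
      (hright.trans (neg_two_mul_trFlux_last Δx χ z d D φ C c (by omega)))]
    ring
  exact congrArg (Δx * ·) (trapezoidTotal_eq_of_flux (by omega) hleft' hint' hright')

/-- Exact mass conservation of the TR (trapezoidal) step of the mass-conservative
TR-BDF2 scheme for the 1D Nernst–Planck equation. Here `c` denotes the grid values
cⁿ, `C` denotes c^{n+γ}, `d j` plays the role of D_{j+1/2}, `D` the grid diffusion
values, and `φ : ℤ → ℝ` the level-n potential including the ghost values φ₋₁, φ_{J+1}. -/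
theorem tr_step_mass_conservation
    (J : ℕ) (hJ : 2 ≤ J) (Δx Δt γ χ z : ℝ)
    (hΔx : 0 < Δx) (hΔt : 0 < Δt) (hγ0 : 0 < γ) (hγ2 : γ < 2)
    (d D c C : ℕ → ℝ) (φ : ℤ → ℝ)
    (hint : ∀ j, 1 ≤ j → j < J →
      (C j - c j) / (γ * Δt)
        = (d j * (C (j + 1) + c (j + 1)) - (d j + d (j - 1)) * (C j + c j)
            + d (j - 1) * (C (j - 1) + c (j - 1))) / (2 * Δx ^ 2)
          + χ * z * (D (j + 1) * (C (j + 1) + c (j + 1)) * (φ ((j : ℤ) + 2) - φ (j : ℤ))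
              - D (j - 1) * (C (j - 1) + c (j - 1)) * (φ (j : ℤ) - φ ((j : ℤ) - 2)))
            / (8 * Δx ^ 2))
    (hleft :
      (C 0 - c 0) / (γ * Δt)
        = d 0 * (C 1 - C 0 + c 1 - c 0) / Δx ^ 2
          + χ * z * (D 0 * (C 0 + c 0) * (φ 1 - φ (-1))
              + D 1 * (C 1 + c 1) * (φ 2 - φ 0)) / (4 * Δx ^ 2))
    (hright :
      (C J - c J) / (γ * Δt)
        = -(d (J - 1) * (C J - C (J - 1) + c J - c (J - 1))) / Δx ^ 2
          - χ * z * (D (J - 1) * (C (J - 1) + c (J - 1)) * (φ (J : ℤ) - φ ((J : ℤ) - 2))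
              + D J * (C J + c J) * (φ ((J : ℤ) + 1) - φ ((J : ℤ) - 1))) / (4 * Δx ^ 2)) :
    Δx * (C 0 / 2 + ∑ j ∈ Finset.Ico 1 J, C j + C J / 2)
      = Δx * (c 0 / 2 + ∑ j ∈ Finset.Ico 1 J, c j + c J / 2) :=
  tr_step_mass_conservation_general J hJ Δx Δt γ χ z hΔt hγ0 d D c C φ hint hleft hright
end

section
/- Let J ≥ 2, Δx > 0, Δt > 0, 0 < γ < 1, χ ∈ ℝ, z ∈ ℝ. Let d : {0,…,J-1} → ℝ, D : {0,…,J} → ℝ, φ : {-1,…,J+1} → ℝ, and let c, C, u : {0,…,J} → ℝ denote the grid values c^n, c^{n+γ}, c^{n+1} respectively. Suppose: (i) for every interior index 1 ≤ j ≤ J-1, (u_j - C_j)/((1-γ)Δt) = ((1-γ)/(2-γ)) (C_j - c_j)/(γΔt) + (1/(2-γ)) F_j(u), where F_j(u) = [ d_j u_{j+1} - (d_j + d_{j-1}) u_j + d_{j-1} u_{j-1} ]/(Δx)² + χ z [ D_{j+1} u_{j+1}(φ_{j+2} - φ_j) - D_{j-1} u_{j-1}(φ_j - φ_{j-2}) ]/(4(Δx)²);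 (ii) at the left boundary, (u_0 - C_0)/((1-γ)Δt) = ((1-γ)/(2-γ)) (C_0 - c_0)/(γΔt) + (2/(2-γ)) d_0 (u_1 - u_0)/(Δx)² + (χ z/(2-γ)) [ D_0 u_0 (φ_1 - φ_{-1}) + D_1 u_1 (φ_2 - φ_0) ]/(2(Δx)²); (iii) at the right boundary, (u_J - C_J)/((1-γ)Δt) = ((1-γ)/(2-γ)) (C_J - c_J)/(γΔt) - (2/(2-γ)) d_{J-1} (u_J - u_{J-1})/(Δx)² - (χ z/(2-γ)) [ D_{J-1} u_{J-1}(φ_J - φ_{J-2}) + D_J u_J (φ_{J+1} - φ_{J-1}) ]/(2(Δx)²). Write T(v) = Δx ( v_0/2 + Σ_{j=1}^{J-1} v_j + v_J/2 ) for the trapezoidal total. Then (T(u) - T(C))/((1-γ)Δt) = ((1-γ)/(2-γ)) (T(C) - T(c))/(γΔt). In particular, if T(C) = T(c) then T(u) = T(C). -/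
/-!
Each BDF2 equation says that a residual `r_j` (the left-hand side minus the memory term) is a
backward difference `H_j - H_{j-1}` of a numerical flux `H_j` through the face `x_{j+1/2}`,
while the conservative boundary equations give `r_0 = 2 H_0` and `r_J = -2 H_{J-1}`. The
trapezoidal weights `1/2` at the ends therefore make `T(r)` telescope to zero, and `T` is linear.
-/

open Finset

noncomputable def trapezoid (Δx : ℝ) (J : ℕ) (v : ℕ → ℝ) : ℝ :=
  Δx * (v 0 / 2 + ∑ j ∈ Ico 1 J, v j + v J / 2)

section Trapezoid

variable (Δx : ℝ) (J : ℕ)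

theorem trapezoid_sub (v w : ℕ → ℝ) :
    trapezoid Δx J (fun j => v j - w j) = trapezoid Δx J v - trapezoid Δx J w := by
  simp only [trapezoid, sum_sub_distrib]
  ring

theorem trapezoid_div_const (v : ℕ → ℝ) (a : ℝ) :
    trapezoid Δx J (fun j => v j / a) = trapezoid Δx J v / a := by
  simp only [trapezoid, ← sum_div]
  ring

theorem trapezoid_const_mul (v : ℕ → ℝ) (a : ℝ) :
    trapezoid Δx J (fun j => a * v j) = a * trapezoid Δx J v := by
  simp only [trapezoid, ← mul_sum]
  ring

theorem trapezoid_eq_zero_of_flux (hJ : 1 ≤ J) {v : ℕ → ℝ} (H : ℕ → ℝ)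
    (hint : ∀ j, 1 ≤ j → j < J → v j = H j - H (j - 1))
    (hleft : v 0 = 2 * H 0) (hright : v J = -2 * H (J - 1)) :
    trapezoid Δx J v = 0 := by
  obtain ⟨m, rfl⟩ : ∃ m, J = m + 1 := ⟨J - 1, by omega⟩
  have htel : ∑ j ∈ Ico 1 (m + 1), v j = H m - H 0 := by
    rw [sum_Ico_eq_sum_range, Nat.add_sub_cancel, ← sum_range_sub]
    refine sum_congr rfl fun i hi => ?_
    have hi : i + 1 < m + 1 := by simpa using hi
    rw [add_comm 1 i, hint (i + 1) (by omega) hi, Nat.add_sub_cancel]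
  rw [trapezoid, htel, hleft, hright, Nat.add_sub_cancel]
  ring

end Trapezoid

section Flux

variable (γ Δx χ z : ℝ) (d D u : ℕ → ℝ) (φ : ℤ → ℝ)

/-- The numerical flux through the face `x_{j+1/2}`, already scaled by the BDF2 weight
`1/(2 - γ)`; its drift part averages the central-difference drifts at the two adjacent nodes. -/
noncomputable def bdf2Flux (j : ℕ) : ℝ :=
  (1 / (2 - γ)) *
    (d j * (u (j + 1) - u j) / Δx ^ 2
      + χ * z * (D j * u j * (φ ((j : ℤ) + 1) - φ ((j : ℤ) - 1))
          + D (j + 1) * u (j + 1) * (φ ((j : ℤ) + 2) - φ (j : ℤ))) / (4 * Δx ^ 2))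

theorem bdf2Flux_sub_bdf2Flux_pred {j : ℕ} (hj : 1 ≤ j) :
    bdf2Flux γ Δx χ z d D u φ j - bdf2Flux γ Δx χ z d D u φ (j - 1)
      = (1 / (2 - γ)) *
          ((d j * u (j + 1) - (d j + d (j - 1)) * u j + d (j - 1) * u (j - 1)) / Δx ^ 2
            + χ * z * (D (j + 1) * u (j + 1) * (φ ((j : ℤ) + 2) - φ (j : ℤ))
                - D (j - 1) * u (j - 1) * (φ (j : ℤ) - φ ((j : ℤ) - 2))) / (4 * Δx ^ 2)) := by
  obtain ⟨i, rfl⟩ : ∃ i, j = i + 1 := ⟨j - 1, by omega⟩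
  simp only [bdf2Flux, Nat.add_sub_cancel]
  push_cast
  ring_nf

theorem two_mul_bdf2Flux_zero :
    2 * bdf2Flux γ Δx χ z d D u φ 0
      = (2 / (2 - γ)) * (d 0 * (u 1 - u 0) / Δx ^ 2)
        + (χ * z / (2 - γ)) *
          ((D 0 * u 0 * (φ 1 - φ (-1)) + D 1 * u 1 * (φ 2 - φ 0)) / (2 * Δx ^ 2)) := by
  simp only [bdf2Flux]
  push_cast
  ring

theorem neg_two_mul_bdf2Flux_pred {J : ℕ} (hJ : 1 ≤ J) :
    -2 * bdf2Flux γ Δx χ z d D u φ (J - 1)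
      = -(2 / (2 - γ)) * (d (J - 1) * (u J - u (J - 1)) / Δx ^ 2)
        - (χ * z / (2 - γ)) *
          ((D (J - 1) * u (J - 1) * (φ (J : ℤ) - φ ((J : ℤ) - 2))
            + D J * u J * (φ ((J : ℤ) + 1) - φ ((J : ℤ) - 1))) / (2 * Δx ^ 2)) := by
  obtain ⟨m, rfl⟩ : ∃ m, J = m + 1 := ⟨J - 1, by omega⟩
  simp only [bdf2Flux, Nat.add_sub_cancel]
  push_cast
  ring_nf

end Flux

/-- `d j` plays the role of D_{j+1/2}, and `φ : ℤ → ℝ` includes the ghost values φ_{-1}, φ_{J+1}. -/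
theorem bdf2_step_mass_conservation_general
    (J : ℕ) (hJ : 2 ≤ J) (Δx Δt γ χ z : ℝ)
    (hΔt : 0 < Δt) (hγ1 : γ < 1)
    (d D c C u : ℕ → ℝ) (φ : ℤ → ℝ)
    (hint : ∀ j, 1 ≤ j → j < J →
      (u j - C j) / ((1 - γ) * Δt)
        = ((1 - γ) / (2 - γ)) * ((C j - c j) / (γ * Δt))
          + (1 / (2 - γ)) *
            ((d j * u (j + 1) - (d j + d (j - 1)) * u j + d (j - 1) * u (j - 1)) / Δx ^ 2
              + χ * z * (D (j + 1) * u (j + 1) * (φ ((j : ℤ) + 2) - φ (j : ℤ))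
                  - D (j - 1) * u (j - 1) * (φ (j : ℤ) - φ ((j : ℤ) - 2))) / (4 * Δx ^ 2)))
    (hleft :
      (u 0 - C 0) / ((1 - γ) * Δt)
        = ((1 - γ) / (2 - γ)) * ((C 0 - c 0) / (γ * Δt))
          + (2 / (2 - γ)) * (d 0 * (u 1 - u 0) / Δx ^ 2)
          + (χ * z / (2 - γ)) *
            ((D 0 * u 0 * (φ 1 - φ (-1)) + D 1 * u 1 * (φ 2 - φ 0)) / (2 * Δx ^ 2)))
    (hright :
      (u J - C J) / ((1 - γ) * Δt)
        = ((1 - γ) / (2 - γ)) * ((C J - c J) / (γ * Δt))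
          - (2 / (2 - γ)) * (d (J - 1) * (u J - u (J - 1)) / Δx ^ 2)
          - (χ * z / (2 - γ)) *
            ((D (J - 1) * u (J - 1) * (φ (J : ℤ) - φ ((J : ℤ) - 2))
              + D J * u J * (φ ((J : ℤ) + 1) - φ ((J : ℤ) - 1))) / (2 * Δx ^ 2))) :
    (Δx * (u 0 / 2 + ∑ j ∈ Finset.Ico 1 J, u j + u J / 2)
        - Δx * (C 0 / 2 + ∑ j ∈ Finset.Ico 1 J, C j + C J / 2)) / ((1 - γ) * Δt)
      = ((1 - γ) / (2 - γ)) *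
        ((Δx * (C 0 / 2 + ∑ j ∈ Finset.Ico 1 J, C j + C J / 2)
          - Δx * (c 0 / 2 + ∑ j ∈ Finset.Ico 1 J, c j + c J / 2)) / (γ * Δt))
      ∧
      (Δx * (C 0 / 2 + ∑ j ∈ Finset.Ico 1 J, C j + C J / 2)
          = Δx * (c 0 / 2 + ∑ j ∈ Finset.Ico 1 J, c j + c J / 2)
        → Δx * (u 0 / 2 + ∑ j ∈ Finset.Ico 1 J, u j + u J / 2)
          = Δx * (C 0 / 2 + ∑ j ∈ Finset.Ico 1 J, C j + C J / 2)) := by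
  have hres := trapezoid_eq_zero_of_flux Δx J (by omega)
    (v := fun j => (u j - C j) / ((1 - γ) * Δt) - (1 - γ) / (2 - γ) * ((C j - c j) / (γ * Δt)))
    (bdf2Flux γ Δx χ z d D u φ)
    (fun j h1 h2 => by
      rw [hint j h1 h2, bdf2Flux_sub_bdf2Flux_pred γ Δx χ z d D u φ h1]; ring)
    (by rw [hleft, two_mul_bdf2Flux_zero]; ring)
    (by rw [hright, neg_two_mul_bdf2Flux_pred γ Δx χ z d D u φ (by omega)]; ring)
  simp only [trapezoid_sub, trapezoid_div_const, trapezoid_const_mul] at hres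
  have hmass := sub_eq_zero.mp hres
  refine ⟨hmass, fun hCc => ?_⟩
  have hstep : (1 - γ) * Δt ≠ 0 := (mul_pos (sub_pos.mpr hγ1) hΔt).ne'
  have hzero : (trapezoid Δx J u - trapezoid Δx J C) / ((1 - γ) * Δt) = 0 := by
    rw [hmass, show trapezoid Δx J C = trapezoid Δx J c from hCc, sub_self, zero_div, mul_zero]
  exact sub_eq_zero.mp ((div_eq_zero_iff.mp hzero).resolve_right hstep)

/-- Exact mass conservation of the BDF2 step of the mass-conservative TR-BDF2
scheme for the 1D Nernst–Planck equation. Here `c`, `C`, `u` denote the grid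
values cⁿ, c^{n+γ}, c^{n+1}, `d j` plays the role of D_{j+1/2}, `D` the grid
diffusion values, and `φ : ℤ → ℝ` the level-n potential including ghost values. -/
theorem bdf2_step_mass_conservation
    (J : ℕ) (hJ : 2 ≤ J) (Δx Δt γ χ z : ℝ)
    (hΔx : 0 < Δx) (hΔt : 0 < Δt) (hγ0 : 0 < γ) (hγ1 : γ < 1)
    (d D c C u : ℕ → ℝ) (φ : ℤ → ℝ)
    (hint : ∀ j, 1 ≤ j → j < J →
      (u j - C j) / ((1 - γ) * Δt)
        = ((1 - γ) / (2 - γ)) * ((C j - c j) / (γ * Δt))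
          + (1 / (2 - γ)) *
            ((d j * u (j + 1) - (d j + d (j - 1)) * u j + d (j - 1) * u (j - 1)) / Δx ^ 2
              + χ * z * (D (j + 1) * u (j + 1) * (φ ((j : ℤ) + 2) - φ (j : ℤ))
                  - D (j - 1) * u (j - 1) * (φ (j : ℤ) - φ ((j : ℤ) - 2))) / (4 * Δx ^ 2)))
    (hleft :
      (u 0 - C 0) / ((1 - γ) * Δt)
        = ((1 - γ) / (2 - γ)) * ((C 0 - c 0) / (γ * Δt))
          + (2 / (2 - γ)) * (d 0 * (u 1 - u 0) / Δx ^ 2)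
          + (χ * z / (2 - γ)) *
            ((D 0 * u 0 * (φ 1 - φ (-1)) + D 1 * u 1 * (φ 2 - φ 0)) / (2 * Δx ^ 2)))
    (hright :
      (u J - C J) / ((1 - γ) * Δt)
        = ((1 - γ) / (2 - γ)) * ((C J - c J) / (γ * Δt))
          - (2 / (2 - γ)) * (d (J - 1) * (u J - u (J - 1)) / Δx ^ 2)
          - (χ * z / (2 - γ)) *
            ((D (J - 1) * u (J - 1) * (φ (J : ℤ) - φ ((J : ℤ) - 2))
              + D J * u J * (φ ((J : ℤ) + 1) - φ ((J : ℤ) - 1))) / (2 * Δx ^ 2))) :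
    (Δx * (u 0 / 2 + ∑ j ∈ Finset.Ico 1 J, u j + u J / 2)
        - Δx * (C 0 / 2 + ∑ j ∈ Finset.Ico 1 J, C j + C J / 2)) / ((1 - γ) * Δt)
      = ((1 - γ) / (2 - γ)) *
        ((Δx * (C 0 / 2 + ∑ j ∈ Finset.Ico 1 J, C j + C J / 2)
          - Δx * (c 0 / 2 + ∑ j ∈ Finset.Ico 1 J, c j + c J / 2)) / (γ * Δt))
      ∧
      (Δx * (C 0 / 2 + ∑ j ∈ Finset.Ico 1 J, C j + C J / 2)
          = Δx * (c 0 / 2 + ∑ j ∈ Finset.Ico 1 J, c j + c J / 2)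
        → Δx * (u 0 / 2 + ∑ j ∈ Finset.Ico 1 J, u j + u J / 2)
          = Δx * (C 0 / 2 + ∑ j ∈ Finset.Ico 1 J, C j + C J / 2)) :=
  bdf2_step_mass_conservation_general J hJ Δx Δt γ χ z hΔt hγ1 d D c C u φ hint hleft hright
end
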